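/- arXiv:1710.04186 — 5 statements merged into one kernel-verified Lean document; each statement's English description precedes it below -/
import Mathlib

section
/- Let A be an integral domain, F a field, and σ₁,…,σₙ pairwise distinct injective ring homomorphisms from A to F. Then there exist elements a₁,…,aₙ ∈ A such that the n×n matrix with (i,j)-entry σⱼ(aᵢ) has nonzero determinant. -/
/-!
Distinct ring homomorphisms `A → F` are distinct characters of the multiplicative monoid of `A`,
hence linearly independent over `F` (Dedekind). For linearly independent functions
`f₁, …, fₙ : X → F` the evaluation vectors `(f₁ x, …, fₙ x)` span `Fⁿ`, since a functional
killing all of them would be a linear relation among the `fᵢ`; choosing `n` of them forming a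
basis gives points `x₁, …, xₙ` with `det (fⱼ xᵢ) ≠ 0`.
-/

open Submodule in
theorem span_range_eval_eq_top_of_linearIndependent {ι X K : Type*} [Fintype ι] [Field K]
    {f : ι → X → K} (hf : LinearIndependent K f) :
    span K (Set.range fun x i => f i x) = ⊤ := by
  rw [← dualAnnihilator_eq_bot_iff, eq_bot_iff]
  intro φ hφ
  have hφ_eval : ∀ x, φ (fun i => f i x) = 0 :=
    fun x => (mem_dualAnnihilator φ).mp hφ _ (subset_span ⟨x, rfl⟩)
  have hcoeff : ∀ i, φ (Pi.basisFun K ι i) = 0 := by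
    refine Fintype.linearIndependent_iff.mp hf _ (funext fun x => ?_)
    have := hφ_eval x
    rw [← (Pi.basisFun K ι).sum_repr (fun i => f i x), map_sum] at this
    simpa [mul_comm] using this
  exact (Pi.basisFun K ι).ext hcoeff

theorem exists_det_ne_zero_of_span_eq_top {ι X K : Type*} [Fintype ι] [DecidableEq ι] [Field K]
    {v : X → ι → K} (hv : Submodule.span K (Set.range v) = ⊤) :
    ∃ x : ι → X, (Matrix.of fun i j => v (x i) j).det ≠ 0 := by
  obtain ⟨κ, a, -, hspan, hli⟩ := exists_linearIndependent' K v
  let b : Module.Basis κ K (ι → K) := .mk hli (by rw [hspan, hv])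
  let e : κ ≃ ι := b.indexEquiv (Pi.basisFun K ι)
  refine ⟨a ∘ e.symm, ?_⟩
  rw [← isUnit_iff_ne_zero, ← Matrix.isUnit_iff_isUnit_det,
    ← Matrix.linearIndependent_rows_iff_isUnit]
  exact hli.comp e.symm e.symm.injective

theorem LinearIndependent.exists_det_ne_zero {ι X K : Type*} [Fintype ι] [DecidableEq ι] [Field K]
    {f : ι → X → K} (hf : LinearIndependent K f) :
    ∃ x : ι → X, (Matrix.of fun i j => f j (x i)).det ≠ 0 :=
  exists_det_ne_zero_of_span_eq_top (span_range_eval_eq_top_of_linearIndependent hf)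

theorem RingHom.linearIndependent_coeFn (A F : Type*) [NonAssocSemiring A] [CommRing F]
    [IsDomain F] : LinearIndependent F (fun σ : A →+* F => (σ : A → F)) :=
  (linearIndependent_monoidHom A F).comp _ RingHom.coe_monoidHom_injective

theorem stmt0_general {A F : Type*} [CommRing A] [Field F]
    (n : ℕ) (σ : Fin n → (A →+* F))
    (hdist : ∀ i j, i ≠ j → σ i ≠ σ j) :
    ∃ a : Fin n → A, (Matrix.of fun i j => σ j (a i)).det ≠ 0 := by
  have hσ : Function.Injective σ := fun i j h => by_contra fun hij => hdist i j hij h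
  exact ((RingHom.linearIndependent_coeFn A F).comp σ hσ).exists_det_ne_zero

/-- Dedekind-type lemma: given pairwise distinct injective ring homomorphisms
`σ₁, …, σₙ : A → F` from an integral domain to a field, there exist `a₁, …, aₙ ∈ A`
such that the matrix `(σⱼ(aᵢ))` has nonzero determinant. -/
theorem stmt0 {A F : Type*} [CommRing A] [IsDomain A] [Field F]
    (n : ℕ) (σ : Fin n → (A →+* F))
    (hinj : ∀ i, Function.Injective (σ i))
    (hdist : ∀ i j, i ≠ j → σ i ≠ σ j) :
    ∃ a : Fin n → A, (Matrix.of fun i j => σ j (a i)).det ≠ 0 :=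
  stmt0_general n σ hdist
end

section
/- Let L/K be a finite Galois extension with group G, and let μ be an automorphism of L normalizing the setup such that ℳℳ⁻¹ ∩ G = {1} (separation). Then K·μ(K), the subfield of L generated by K and μ(K), equals L^{G_μ}, where G_μ = {g ∈ G : gμg⁻¹ = μ}. -/
/-!
An element `g ∈ G` fixing `μ(K)` pointwise has `μ⁻¹ g μ` fixing `K`, so `μ⁻¹ g μ ∈ G` by Artin's
theorem; separation then forces `g` to commute with `μ`. Hence the subgroup of `Gal(L/K) = G`
fixing the intermediate field `K(μ(K))` is exactly `G_μ`, and the Galois correspondence gives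
`K(μ(K)) = L^{G_μ}`.
-/

theorem conj_eq_self_of_inv_conj_mem {Γ : Type*} [Group Γ] {G : Subgroup Γ} {M : Submonoid Γ}
    (hsep : ∀ μ₁ ∈ M, ∀ μ₂ ∈ M, μ₁ * μ₂⁻¹ ∈ G → μ₁ = μ₂)
    (hinv : ∀ g ∈ G, ∀ ν ∈ M, g * ν * g⁻¹ ∈ M)
    {μ g : Γ} (hμ : μ ∈ M) (hg : g ∈ G) (hconj : μ⁻¹ * g * μ ∈ G) :
    g * μ * g⁻¹ = μ := by
  set h := μ⁻¹ * g * μ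
  have hconj_mem : h⁻¹ * μ * h ∈ M := by
    simpa using hinv h⁻¹ (G.inv_mem hconj) μ hμ
  have hquot : h⁻¹ * μ * h * μ⁻¹ ∈ G := by
    convert G.mul_mem (G.inv_mem hconj) hg using 1
    simp only [h]; group
  have hcomm : h⁻¹ * μ * h = μ := hsep _ hconj_mem μ hμ hquot
  have hgh : g = h := by
    calc g = μ * h * μ⁻¹ := by simp only [h]; group
      _ = h * (h⁻¹ * μ * h) * μ⁻¹ := by group
      _ = h := by rw [hcomm]; group
  calc g * μ * g⁻¹ = h * (h⁻¹ * μ * h) * h⁻¹ := by rw [hgh, hcomm]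
    _ = μ := by group

theorem coe_fixedPoints_subfield {L : Type*} [Field L] (G : Subgroup (RingAut L)) :
    (FixedPoints.subfield G L : Set L) = {x : L | ∀ g ∈ G, g x = x} :=
  Set.ext fun _ ↦ ⟨fun hx g hg ↦ hx ⟨g, hg⟩, fun hx g ↦ hx g g.2⟩

theorem mem_of_forall_fixedPoints_apply_eq {L : Type*} [Field L] {G : Subgroup (RingAut L)}
    [Finite G] {σ : RingAut L} (hσ : ∀ x ∈ FixedPoints.subfield G L, σ x = x) : σ ∈ G := by
  let f : L →ₐ[FixedPoints.subfield G L] L :=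
    { toRingHom := σ.toRingHom, commutes' := fun k ↦ hσ k k.2 }
  obtain ⟨g, hg⟩ := (FixedPoints.toAlgHom_bijective G L).2 f
  convert g.2
  ext x
  exact (DFunLike.congr_fun hg x).symm

theorem closure_fixedPoints_union_image_subset {L : Type*} [Field L] (G : Subgroup (RingAut L))
    (μ : RingAut L) :
    (Subfield.closure ({x : L | ∀ g ∈ G, g x = x} ∪ μ '' {x : L | ∀ g ∈ G, g x = x}) : Set L)
      ⊆ {x : L | ∀ g ∈ G, g * μ * g⁻¹ = μ → g x = x} := by
  intro x hx g hg hgμ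
  have hcomm : g * μ = μ * g := by rw [← mul_inv_eq_iff_eq_mul, hgμ]
  refine RingHom.eqOn_field_closure (f := g.toRingHom) (g := RingHom.id L) ?_ hx
  rintro y (hy | ⟨k, hk, rfl⟩)
  · exact hy g hg
  · change (g * μ) k = μ k
    rw [hcomm]
    exact congrArg μ (hk g hg)

theorem subset_closure_fixedPoints_union_image {L : Type*} [Field L] {G : Subgroup (RingAut L)}
    [Finite G] {M : Submonoid (RingAut L)}
    (hsep : ∀ μ₁ ∈ M, ∀ μ₂ ∈ M, μ₁ * μ₂⁻¹ ∈ G → μ₁ = μ₂)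
    (hinv : ∀ g ∈ G, ∀ ν ∈ M, g * ν * g⁻¹ ∈ M) {μ : RingAut L} (hμ : μ ∈ M) :
    {x : L | ∀ g ∈ G, g * μ * g⁻¹ = μ → g x = x}
      ⊆ (Subfield.closure ({x : L | ∀ g ∈ G, g x = x} ∪ μ '' {x : L | ∀ g ∈ G, g x = x}) :
          Set L) := by
  set K := FixedPoints.subfield G L
  set E : IntermediateField K L := IntermediateField.adjoin K (μ '' K)
  have hE : (E : Set L) = Subfield.closure ((K : Set L) ∪ μ '' K) := by
    rw [← IntermediateField.coe_toSubfield, IntermediateField.adjoin_toSubfield,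
      FixedPoints.coe_algebraMap, Subfield.coe_subtype, Subtype.range_coe_subtype,
      SetLike.setOfPred_mem_eq]
  rw [← coe_fixedPoints_subfield, ← hE]
  intro x hx
  rw [SetLike.mem_coe, ← IsGalois.fixedField_fixingSubgroup E]
  intro σ
  set g : RingAut L := (σ : L ≃ₐ[K] L).toRingEquiv
  have hgG : g ∈ G := mem_of_forall_fixedPoints_apply_eq fun k hk ↦ σ.1.commutes ⟨k, hk⟩
  have hg_fix_image : ∀ k ∈ K, g (μ k) = μ k := fun k hk ↦
    (mem_fixingSubgroup_iff _).1 σ.2 (μ k) (IntermediateField.subset_adjoin K _ ⟨k, hk, rfl⟩)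
  have hconj : μ⁻¹ * g * μ ∈ G := mem_of_forall_fixedPoints_apply_eq fun k hk ↦ by
    change μ.symm (g (μ k)) = k
    rw [hg_fix_image k hk, RingEquiv.symm_apply_apply]
  exact hx g hgG (conj_eq_self_of_inv_conj_mem hsep hinv hμ hgG hconj)

/-- Let `G` be a finite subgroup and `ℳ` a submonoid of the automorphism group of a field
`L`, with `ℳ` closed under `G`-conjugation and satisfying the separation condition
`ℳℳ⁻¹ ∩ G = 1`.  Let `K = L^G`.  Then for `μ ∈ ℳ`, the subfield of `L` generated by
`K` and `μ(K)` equals the fixed field `L^{G_μ}` of `G_μ = {g ∈ G : gμg⁻¹ = μ}`. -/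
theorem stmt10 (L : Type*) [Field L] (G : Subgroup (RingAut L))
    (hGfin : (G : Set (RingAut L)).Finite)
    (M : Submonoid (RingAut L))
    (hsep : ∀ μ₁ ∈ M, ∀ μ₂ ∈ M, μ₁ * μ₂⁻¹ ∈ G → μ₁ = μ₂)
    (hinv : ∀ g ∈ G, ∀ ν ∈ M, g * ν * g⁻¹ ∈ M)
    (μ : RingAut L) (hμ : μ ∈ M) :
    {x : L | ∀ g ∈ G, g * μ * g⁻¹ = μ → g x = x}
      = ↑(Subfield.closure
          ({x : L | ∀ g ∈ G, g x = x} ∪ (⇑μ '' {x : L | ∀ g ∈ G, g x = x}))) := by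
  have : Finite G := hGfin.to_subtype
  exact (subset_closure_fixedPoints_union_image hsep hinv hμ).antisymm
    (closure_fixedPoints_union_image_subset G μ)
end

section
/- In the setup above, for μ₁, μ₂ ∈ ℳ, the K-bimodules K[μ₁]K and K[μ₂]K are isomorphic if and only if μ₂ = gμ₁g⁻¹ for some g ∈ G. -/
set_option maxHeartbeats 1000000
set_option synthInstance.maxHeartbeats 1000000

section SkewDefs

variable {L : Type*} [Field L]

/-- Left multiplication of `X ∈ ℒ = L ∗ ℳ` (realized inside `RingAut L →₀ L`) by `k ∈ L`. -/
noncomputable def lsm (k : L) (X : RingAut L →₀ L) : RingAut L →₀ L :=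
  X.sum fun ν c => Finsupp.single ν (k * c)

/-- Right multiplication of `X ∈ ℒ = L ∗ ℳ` by `k ∈ L`: `(cν)·k = (c ν(k)) ν`. -/
noncomputable def rsm (X : RingAut L →₀ L) (k : L) : RingAut L →₀ L :=
  X.sum fun ν c => Finsupp.single ν (c * ν k)

/-- The symmetrized element `[aμ] = Σ_{t ∈ T} t(a)·(tμt⁻¹)`, where `T` is a transversal
of the cosets of `G_μ` in `G`. -/
noncomputable def bk (T : Finset (RingAut L)) (μ : RingAut L) (a : L) : RingAut L →₀ L :=
  ∑ t ∈ T, Finsupp.single (t * μ * t⁻¹) (t a)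

end SkewDefs

/-- The `K`-sub-bimodule `K·B·K` of `ℒ` generated by an element `B`, where `K = L^G`. -/
noncomputable def KbimK {L : Type*} [Field L] (G : Subgroup (RingAut L))
    (B : RingAut L →₀ L) : AddSubgroup (RingAut L →₀ L) :=
  AddSubgroup.closure {Y | ∃ k₁ ∈ {x : L | ∀ g ∈ G, g x = x},
    ∃ k₂ ∈ {x : L | ∀ g ∈ G, g x = x}, Y = lsm k₁ (rsm B k₂)}

section AuxLemmas

variable {L : Type*} [Field L]

lemma lsm_add (k : L) (X Y : RingAut L →₀ L) : lsm k (X + Y) = lsm k X + lsm k Y :=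
  Finsupp.sum_add_index' (fun ν => by simp) (fun ν c₁ c₂ => by rw [mul_add, Finsupp.single_add])

lemma lsm_single (k : L) (ν : RingAut L) (c : L) :
    lsm k (Finsupp.single ν c) = Finsupp.single ν (k * c) :=
  Finsupp.sum_single_index (by simp)

lemma rsm_add (X Y : RingAut L →₀ L) (k : L) : rsm (X + Y) k = rsm X k + rsm Y k :=
  Finsupp.sum_add_index' (fun ν => by simp) (fun ν c₁ c₂ => by rw [add_mul, Finsupp.single_add])

lemma rsm_single (ν : RingAut L) (c k : L) :
    rsm (Finsupp.single ν c) k = Finsupp.single ν (c * ν k) :=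
  Finsupp.sum_single_index (by simp)

/-- `bk T μ` as an additive homomorphism in `a`. -/
noncomputable def bkHom (T : Finset (RingAut L)) (μ : RingAut L) : L →+ (RingAut L →₀ L) :=
  AddMonoidHom.mk' (bk T μ) (fun a b => by
    simp only [bk, map_add, Finsupp.single_add, Finset.sum_add_distrib])

lemma bkHom_apply (T : Finset (RingAut L)) (μ : RingAut L) (a : L) : bkHom T μ a = bk T μ a := rfl

lemma bk_add (T : Finset (RingAut L)) (μ : RingAut L) (a b : L) :
    bk T μ (a + b) = bk T μ a + bk T μ b := (bkHom T μ).map_add a b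

lemma bk_zero (T : Finset (RingAut L)) (μ : RingAut L) : bk T μ 0 = 0 := (bkHom T μ).map_zero

lemma lsm_bk (T : Finset (RingAut L)) (μ : RingAut L) (k a : L)
    (hk : ∀ t ∈ T, t k = k) : lsm k (bk T μ a) = bk T μ (k * a) := by
  have h1 : lsm k (bk T μ a) = ∑ t ∈ T, lsm k (Finsupp.single (t * μ * t⁻¹) (t a)) :=
    map_sum (AddMonoidHom.mk' (lsm k) (lsm_add k)) _ T
  rw [h1, bk]
  refine Finset.sum_congr rfl fun t ht => ?_
  rw [lsm_single, map_mul, hk t ht]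

lemma rsm_bk (T : Finset (RingAut L)) (μ : RingAut L) (k a : L)
    (hk : ∀ t ∈ T, t⁻¹ k = k) : rsm (bk T μ a) k = bk T μ (a * μ k) := by
  have h1 : rsm (bk T μ a) k = ∑ t ∈ T, rsm (Finsupp.single (t * μ * t⁻¹) (t a)) k :=
    map_sum (AddMonoidHom.mk' (fun X => rsm X k) (fun X Y => rsm_add X Y k)) _ T
  rw [h1, bk]
  refine Finset.sum_congr rfl fun t ht => ?_
  have h2 : (t * μ * t⁻¹ : RingAut L) k = t (μ k) := by
    show t (μ (t⁻¹ k)) = t (μ k)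
    rw [hk t ht]
  rw [rsm_single, h2, map_mul]

lemma bk_apply_self (T : Finset (RingAut L)) (μ : RingAut L) (a : L) (t₀ : RingAut L)
    (ht₀ : t₀ ∈ T) (hinj : ∀ t ∈ T, t * μ * t⁻¹ = t₀ * μ * t₀⁻¹ → t = t₀) :
    (bk T μ a) (t₀ * μ * t₀⁻¹) = t₀ a := by
  classical
  rw [bk, Finsupp.finset_sum_apply]
  rw [Finset.sum_eq_single t₀]
  · rw [Finsupp.single_apply, if_pos rfl]
  · intro t ht hne
    rw [Finsupp.single_apply, if_neg]
    exact fun h => hne (hinj t ht h)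
  · intro h; exact absurd ht₀ h

end AuxLemmas

/-- The `K`-bimodules `K[μ₁]K` and `K[μ₂]K` are isomorphic (as `K`-bimodules) if and only
if `μ₂ = gμ₁g⁻¹` for some `g ∈ G`. -/
theorem stmt12 (L : Type*) [Field L] (G : Subgroup (RingAut L))
    (hGfin : (G : Set (RingAut L)).Finite)
    (M : Submonoid (RingAut L))
    (hsep : ∀ ν₁ ∈ M, ∀ ν₂ ∈ M, ν₁ * ν₂⁻¹ ∈ G → ν₁ = ν₂)
    (hinv : ∀ g ∈ G, ∀ ν ∈ M, g * ν * g⁻¹ ∈ M)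
    (μ₁ μ₂ : RingAut L) (hμ₁ : μ₁ ∈ M) (hμ₂ : μ₂ ∈ M)
    (T₁ T₂ : Finset (RingAut L))
    (hT₁a : (↑T₁ : Set (RingAut L)) ⊆ (G : Set (RingAut L)))
    (hT₁b : ∀ g ∈ G, ∃ t ∈ T₁, ∃ h ∈ G, h * μ₁ * h⁻¹ = μ₁ ∧ g = t * h)
    (hT₁c : ∀ t ∈ T₁, ∀ t' ∈ T₁, (∃ h ∈ G, h * μ₁ * h⁻¹ = μ₁ ∧ t = t' * h) → t = t')
    (hT₂a : (↑T₂ : Set (RingAut L)) ⊆ (G : Set (RingAut L)))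
    (hT₂b : ∀ g ∈ G, ∃ t ∈ T₂, ∃ h ∈ G, h * μ₂ * h⁻¹ = μ₂ ∧ g = t * h)
    (hT₂c : ∀ t ∈ T₂, ∀ t' ∈ T₂, (∃ h ∈ G, h * μ₂ * h⁻¹ = μ₂ ∧ t = t' * h) → t = t') :
    (∃ φ : ↥(KbimK G (bk T₁ μ₁ 1)) → ↥(KbimK G (bk T₂ μ₂ 1)),
        Function.Bijective φ
        ∧ (∀ x y : ↥(KbimK G (bk T₁ μ₁ 1)), φ (x + y) = φ x + φ y)
        ∧ (∀ k ∈ {x : L | ∀ g ∈ G, g x = x}, ∀ x y : ↥(KbimK G (bk T₁ μ₁ 1)),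
            (↑y : RingAut L →₀ L) = lsm k ↑x → (↑(φ y) : RingAut L →₀ L) = lsm k ↑(φ x))
        ∧ (∀ k ∈ {x : L | ∀ g ∈ G, g x = x}, ∀ x y : ↥(KbimK G (bk T₁ μ₁ 1)),
            (↑y : RingAut L →₀ L) = rsm (↑x) k → (↑(φ y) : RingAut L →₀ L) = rsm (↑(φ x)) k))
      ↔ ∃ g ∈ G, μ₂ = g * μ₁ * g⁻¹ := by
  classical
  -- injectivity of the conjugation maps on the transversals
  have hinj₁ : ∀ t ∈ T₁, ∀ t' ∈ T₁, t * μ₁ * t⁻¹ = t' * μ₁ * t'⁻¹ → t = t' := by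
    intro t ht t' ht' h
    refine hT₁c t ht t' ht' ⟨t'⁻¹ * t, mul_mem (inv_mem (hT₁a ht')) (hT₁a ht), ?_, by group⟩
    have h2 : (t'⁻¹ * t) * μ₁ * (t'⁻¹ * t)⁻¹ = t'⁻¹ * (t * μ₁ * t⁻¹) * t' := by group
    rw [h2, h]; group
  have hinj₂ : ∀ t ∈ T₂, ∀ t' ∈ T₂, t * μ₂ * t⁻¹ = t' * μ₂ * t'⁻¹ → t = t' := by
    intro t ht t' ht' h
    refine hT₂c t ht t' ht' ⟨t'⁻¹ * t, mul_mem (inv_mem (hT₂a ht')) (hT₂a ht), ?_, by group⟩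
    have h2 : (t'⁻¹ * t) * μ₂ * (t'⁻¹ * t)⁻¹ = t'⁻¹ * (t * μ₂ * t⁻¹) * t' := by group
    rw [h2, h]; group
  constructor
  · -- the hard direction
    rintro ⟨φ, ⟨φinj, φsurj⟩, φadd, φl, φr⟩
    haveI : Finite ↥G := hGfin.to_subtype
    haveI : FaithfulSMul ↥G L := ⟨fun {g₁ g₂} h => Subtype.ext (RingEquiv.ext fun x => h x)⟩
    set Kset : Set L := {x : L | ∀ g ∈ G, g x = x} with hKsetdef
    have hKone : (1 : L) ∈ Kset := fun g _ => map_one g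
    have hKmul : ∀ k₁ ∈ Kset, ∀ k₂ ∈ Kset, k₁ * k₂ ∈ Kset := fun k₁ h₁ k₂ h₂ g hg => by
      rw [map_mul, h₁ g hg, h₂ g hg]
    -- transversals are nonempty
    obtain ⟨t₁, ht₁, -⟩ := hT₁b 1 (one_mem G)
    obtain ⟨t₂, ht₂, -⟩ := hT₂b 1 (one_mem G)
    -- coefficient-extraction maps
    set e₁ : (RingAut L →₀ L) → L := fun X => t₁⁻¹ (X (t₁ * μ₁ * t₁⁻¹)) with he₁def
    set e₂ : (RingAut L →₀ L) → L := fun X => t₂⁻¹ (X (t₂ * μ₂ * t₂⁻¹)) with he₂def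
    have he₁ : ∀ a, e₁ (bk T₁ μ₁ a) = a := by
      intro a
      rw [he₁def]
      simp only
      rw [bk_apply_self T₁ μ₁ a t₁ ht₁ (fun t ht h => hinj₁ t ht t₁ ht₁ h)]
      exact t₁.symm_apply_apply a
    have he₂ : ∀ a, e₂ (bk T₂ μ₂ a) = a := by
      intro a
      rw [he₂def]
      simp only
      rw [bk_apply_self T₂ μ₂ a t₂ ht₂ (fun t ht h => hinj₂ t ht t₂ ht₂ h)]
      exact t₂.symm_apply_apply a
    have hbk₁inj : ∀ a b : L, bk T₁ μ₁ a = bk T₁ μ₁ b → a = b := fun a b h => by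
      rw [← he₁ a, ← he₁ b, h]
    have hbk₂inj : ∀ a b : L, bk T₂ μ₂ a = bk T₂ μ₂ b → a = b := fun a b h => by
      rw [← he₂ a, ← he₂ b, h]
    -- characterization of the bimodules
    set Agrp₁ : AddSubgroup L :=
      AddSubgroup.closure {a | ∃ k₁ ∈ Kset, ∃ k₂ ∈ Kset, a = k₁ * μ₁ k₂} with hA₁def
    set Agrp₂ : AddSubgroup L :=
      AddSubgroup.closure {a | ∃ k₁ ∈ Kset, ∃ k₂ ∈ Kset, a = k₁ * μ₂ k₂} with hA₂def
    have hchar : ∀ (T : Finset (RingAut L)) (μ : RingAut L),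
        (↑T : Set (RingAut L)) ⊆ ↑G →
        KbimK G (bk T μ 1) =
          (AddSubgroup.closure {a | ∃ k₁ ∈ Kset, ∃ k₂ ∈ Kset, a = k₁ * μ k₂}).map (bkHom T μ) := by
      intro T μ hTa
      rw [KbimK, AddMonoidHom.map_closure]
      congr 1
      ext Y
      constructor
      · rintro ⟨k₁, hk₁, k₂, hk₂, rfl⟩
        refine ⟨k₁ * μ k₂, ⟨k₁, hk₁, k₂, hk₂, rfl⟩, ?_⟩
        rw [bkHom_apply, rsm_bk T μ k₂ 1 (fun t ht => hk₂ _ (inv_mem (hTa ht))),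
          lsm_bk T μ k₁ _ (fun t ht => hk₁ _ (hTa ht)), one_mul]
      · rintro ⟨a, ⟨k₁, hk₁, k₂, hk₂, rfl⟩, rfl⟩
        refine ⟨k₁, hk₁, k₂, hk₂, ?_⟩
        rw [bkHom_apply, rsm_bk T μ k₂ 1 (fun t ht => hk₂ _ (inv_mem (hTa ht))),
          lsm_bk T μ k₁ _ (fun t ht => hk₁ _ (hTa ht)), one_mul]
    have hmem₁ : ∀ X, X ∈ KbimK G (bk T₁ μ₁ 1) ↔ ∃ a ∈ Agrp₁, bk T₁ μ₁ a = X := by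
      intro X; rw [hchar T₁ μ₁ hT₁a]; exact AddSubgroup.mem_map
    have hmem₂ : ∀ X, X ∈ KbimK G (bk T₂ μ₂ 1) ↔ ∃ a ∈ Agrp₂, bk T₂ μ₂ a = X := by
      intro X; rw [hchar T₂ μ₂ hT₂a]; exact AddSubgroup.mem_map
    -- basic membership facts for Agrp₁
    have hone : (1 : L) ∈ Agrp₁ :=
      AddSubgroup.subset_closure ⟨1, hKone, 1, hKone, by simp⟩
    have hμ₁K : ∀ k ∈ Kset, μ₁ k ∈ Agrp₁ := fun k hk =>
      AddSubgroup.subset_closure ⟨1, hKone, k, hk, (one_mul _).symm⟩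
    have hmulK : ∀ k ∈ Kset, ∀ a ∈ Agrp₁, k * a ∈ Agrp₁ := by
      intro k hk a ha
      induction ha using AddSubgroup.closure_induction with
      | mem x hx =>
        obtain ⟨k₁, hk₁, k₂, hk₂, rfl⟩ := hx
        exact AddSubgroup.subset_closure ⟨k * k₁, hKmul k hk k₁ hk₁, k₂, hk₂, (mul_assoc _ _ _).symm⟩
      | zero => rw [mul_zero]; exact Agrp₁.zero_mem
      | add x y hx hy ihx ihy => rw [mul_add]; exact Agrp₁.add_mem ihx ihy
      | neg x hx ihx => rw [mul_neg]; exact Agrp₁.neg_mem ihx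
    have hmulμ : ∀ k ∈ Kset, ∀ a ∈ Agrp₁, a * μ₁ k ∈ Agrp₁ := by
      intro k hk a ha
      induction ha using AddSubgroup.closure_induction with
      | mem x hx =>
        obtain ⟨k₁, hk₁, k₂, hk₂, rfl⟩ := hx
        refine AddSubgroup.subset_closure ⟨k₁, hk₁, k₂ * k, hKmul k₂ hk₂ k hk, ?_⟩
        rw [map_mul, mul_assoc]
      | zero => rw [zero_mul]; exact Agrp₁.zero_mem
      | add x y hx hy ihx ihy => rw [add_mul]; exact Agrp₁.add_mem ihx ihy
      | neg x hx ihx => rw [neg_mul]; exact Agrp₁.neg_mem ihx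
    have hA₁mul : ∀ a ∈ Agrp₁, ∀ b ∈ Agrp₁, a * b ∈ Agrp₁ := by
      intro a ha b hb
      induction ha using AddSubgroup.closure_induction with
      | mem x hx =>
        obtain ⟨k₁, hk₁, k₂, hk₂, rfl⟩ := hx
        have h2 : k₁ * μ₁ k₂ * b = k₁ * (b * μ₁ k₂) := by ring
        rw [h2]
        exact hmulK k₁ hk₁ _ (hmulμ k₂ hk₂ b hb)
      | zero => rw [zero_mul]; exact Agrp₁.zero_mem
      | add x y hx hy ihx ihy => rw [add_mul]; exact Agrp₁.add_mem ihx ihy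
      | neg x hx ihx => rw [neg_mul]; exact Agrp₁.neg_mem ihx
    -- the transported map Ψ on coefficients
    have hbkmem : ∀ a ∈ Agrp₁, bk T₁ μ₁ a ∈ KbimK G (bk T₁ μ₁ 1) :=
      fun a ha => (hmem₁ _).mpr ⟨a, ha, rfl⟩
    set Ψ : L → L := fun a =>
      if h : a ∈ Agrp₁ then e₂ ↑(φ ⟨bk T₁ μ₁ a, hbkmem a h⟩) else 0 with hΨdef
    have hΨrep : ∀ a (ha : a ∈ Agrp₁),
        (↑(φ ⟨bk T₁ μ₁ a, hbkmem a ha⟩) : RingAut L →₀ L) = bk T₂ μ₂ (Ψ a) ∧ Ψ a ∈ Agrp₂ := by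
      intro a ha
      obtain ⟨b, hb, hbeq⟩ := (hmem₂ _).mp (φ ⟨bk T₁ μ₁ a, hbkmem a ha⟩).2
      have hΨa : Ψ a = b := by
        rw [hΨdef]; simp only [dif_pos ha]
        rw [← hbeq, he₂]
      rw [hΨa, hbeq]
      exact ⟨rfl, hb⟩
    have hΨadd : ∀ a ∈ Agrp₁, ∀ b ∈ Agrp₁, Ψ (a + b) = Ψ a + Ψ b := by
      intro a ha b hb
      have hab : a + b ∈ Agrp₁ := Agrp₁.add_mem ha hb
      have hxy : (⟨bk T₁ μ₁ (a + b), hbkmem _ hab⟩ : ↥(KbimK G (bk T₁ μ₁ 1)))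
          = ⟨bk T₁ μ₁ a, hbkmem a ha⟩ + ⟨bk T₁ μ₁ b, hbkmem b hb⟩ :=
        Subtype.ext (bk_add T₁ μ₁ a b)
      have h1 := (hΨrep (a + b) hab).1
      rw [hxy, φadd] at h1
      have h2 : (↑(φ ⟨bk T₁ μ₁ a, hbkmem a ha⟩ + φ ⟨bk T₁ μ₁ b, hbkmem b hb⟩) : RingAut L →₀ L)
          = bk T₂ μ₂ (Ψ a) + bk T₂ μ₂ (Ψ b) := by
        rw [AddSubgroup.coe_add, (hΨrep a ha).1, (hΨrep b hb).1]
      rw [h2, ← bk_add] at h1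
      exact (hbk₂inj _ _ h1).symm
    have hΨzero : Ψ 0 = 0 := by
      have h := hΨadd 0 Agrp₁.zero_mem 0 Agrp₁.zero_mem
      rw [add_zero] at h
      exact (add_eq_left.mp h.symm)
    have hΨneg : ∀ a ∈ Agrp₁, Ψ (-a) = -Ψ a := by
      intro a ha
      have h := hΨadd a ha (-a) (Agrp₁.neg_mem ha)
      rw [add_neg_cancel, hΨzero] at h
      exact (neg_eq_of_add_eq_zero_right h.symm).symm
    have hΨl : ∀ k ∈ Kset, ∀ a ∈ Agrp₁, Ψ (k * a) = k * Ψ a := by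
      intro k hk a ha
      have hka : k * a ∈ Agrp₁ := hmulK k hk a ha
      have hy : (↑(⟨bk T₁ μ₁ (k * a), hbkmem _ hka⟩ : ↥(KbimK G (bk T₁ μ₁ 1))) : RingAut L →₀ L)
          = lsm k ↑(⟨bk T₁ μ₁ a, hbkmem a ha⟩ : ↥(KbimK G (bk T₁ μ₁ 1))) := by
        rw [lsm_bk T₁ μ₁ k a (fun t ht => hk t (hT₁a ht))]
      have h1 := φl k hk _ _ hy
      rw [(hΨrep _ hka).1, (hΨrep a ha).1,
        lsm_bk T₂ μ₂ k (Ψ a) (fun t ht => hk t (hT₂a ht))] at h1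
      exact hbk₂inj _ _ h1
    have hΨr : ∀ k ∈ Kset, ∀ a ∈ Agrp₁, Ψ (a * μ₁ k) = Ψ a * μ₂ k := by
      intro k hk a ha
      have hka : a * μ₁ k ∈ Agrp₁ := hmulμ k hk a ha
      have hy : (↑(⟨bk T₁ μ₁ (a * μ₁ k), hbkmem _ hka⟩ : ↥(KbimK G (bk T₁ μ₁ 1))) : RingAut L →₀ L)
          = rsm ↑(⟨bk T₁ μ₁ a, hbkmem a ha⟩ : ↥(KbimK G (bk T₁ μ₁ 1))) k := by
        rw [rsm_bk T₁ μ₁ k a (fun t ht => hk _ (inv_mem (hT₁a ht)))]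
      have h1 := φr k hk _ _ hy
      rw [(hΨrep _ hka).1, (hΨrep a ha).1,
        rsm_bk T₂ μ₂ k (Ψ a) (fun t ht => hk _ (inv_mem (hT₂a ht)))] at h1
      exact hbk₂inj _ _ h1
    have hφ0 : φ 0 = 0 := by
      have h := φadd 0 0
      rw [add_zero] at h
      exact (add_eq_left.mp h.symm)
    have hΨinj0 : ∀ a ∈ Agrp₁, Ψ a = 0 → a = 0 := by
      intro a ha h0
      have h1 : (↑(φ ⟨bk T₁ μ₁ a, hbkmem a ha⟩) : RingAut L →₀ L) = 0 := by
        rw [(hΨrep a ha).1, h0, bk_zero]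
      have h2 : φ ⟨bk T₁ μ₁ a, hbkmem a ha⟩ = 0 := Subtype.ext h1
      have h3 : (⟨bk T₁ μ₁ a, hbkmem a ha⟩ : ↥(KbimK G (bk T₁ μ₁ 1))) = 0 :=
        φinj (h2.trans hφ0.symm)
      have h4 : bk T₁ μ₁ a = bk T₁ μ₁ 0 := by
        rw [bk_zero]; exact congrArg Subtype.val h3
      exact hbk₁inj a 0 h4
    set u : L := Ψ 1 with hudef
    have hu : u ≠ 0 := fun h => one_ne_zero (hΨinj0 1 hone h)
    have hΨgen : ∀ k₁ ∈ Kset, ∀ k₂ ∈ Kset, Ψ (k₁ * μ₁ k₂) = k₁ * (u * μ₂ k₂) := by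
      intro k₁ hk₁ k₂ hk₂
      rw [hΨl k₁ hk₁ _ (hμ₁K k₂ hk₂)]
      congr 1
      have h1 : μ₁ k₂ = 1 * μ₁ k₂ := (one_mul _).symm
      rw [h1, hΨr k₂ hk₂ 1 hone]
    have hΨmul : ∀ a ∈ Agrp₁, ∀ b ∈ Agrp₁, u * Ψ (a * b) = Ψ a * Ψ b := by
      intro a ha b hb
      induction ha using AddSubgroup.closure_induction with
      | mem x hx =>
        obtain ⟨k₁, hk₁, k₂, hk₂, rfl⟩ := hx
        have h2 : k₁ * μ₁ k₂ * b = k₁ * (b * μ₁ k₂) := by ring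
        rw [h2, hΨl k₁ hk₁ _ (hmulμ k₂ hk₂ b hb), hΨr k₂ hk₂ b hb, hΨgen k₁ hk₁ k₂ hk₂]
        ring
      | zero => rw [zero_mul, hΨzero, zero_mul, mul_zero]
      | add x y hx hy ihx ihy =>
        rw [add_mul, hΨadd _ (hA₁mul x hx b hb) _ (hA₁mul y hy b hb), hΨadd x hx y hy,
          mul_add, add_mul, ihx, ihy]
      | neg x hx ihx =>
        rw [neg_mul, hΨneg _ (hA₁mul x hx b hb), hΨneg x hx, mul_neg, neg_mul, ihx]
    -- the field-theoretic step: produce g ∈ G with g ∘ μ₁ = μ₂ on K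
    have hKsub : ∀ x : L, x ∈ FixedPoints.subfield ↥G L ↔ x ∈ Kset :=
      fun x => ⟨fun h g hg => h ⟨g, hg⟩, fun h g => h ↑g g.2⟩
    have hArtin : ∀ ρ : RingAut L, (∀ k ∈ Kset, ρ k = k) → ρ ∈ G := by
      intro ρ hρ
      set ℓρ : L →ₐ[FixedPoints.subfield ↥G L] L :=
        { toFun := ρ, map_one' := map_one ρ, map_mul' := map_mul ρ, map_zero' := map_zero ρ,
          map_add' := map_add ρ, commutes' := fun k => hρ ↑k ((hKsub ↑k).mp k.2) }
      obtain ⟨g, hg⟩ := (FixedPoints.toAlgHom_bijective ↥G L).surjective ℓρ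
      have h1 : ∀ x, (↑g : RingAut L) x = ρ x := fun x => DFunLike.congr_fun hg x
      have h2 : ρ = ↑g := RingEquiv.ext fun x => (h1 x).symm
      rw [h2]; exact g.2
    -- build the intermediate field E = K[μ₁(K)]
    have hAlgMem : ∀ k : FixedPoints.subfield ↥G L, (algebraMap (FixedPoints.subfield ↥G L) L k) ∈ Agrp₁ := by
      intro k
      have hk : (↑k : L) ∈ Kset := (hKsub ↑k).mp k.2
      have h0 : (algebraMap (FixedPoints.subfield ↥G L) L) k = ↑k := rfl
      exact AddSubgroup.subset_closure ⟨↑k, hk, 1, hKone, by rw [h0, map_one, mul_one]⟩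
    set SubA : Subalgebra (FixedPoints.subfield ↥G L) L :=
      { carrier := Agrp₁
        mul_mem' := fun {x y} hx hy => hA₁mul x hx y hy
        one_mem' := hone
        add_mem' := fun {x y} hx hy => Agrp₁.add_mem hx hy
        zero_mem' := Agrp₁.zero_mem
        algebraMap_mem' := hAlgMem } with hSubAdef
    have hSalg : SubA.IsAlgebraic := fun x _ =>
      (IsIntegral.of_finite (FixedPoints.subfield ↥G L) x).isAlgebraic
    set E : IntermediateField (FixedPoints.subfield ↥G L) L := hSalg.toIntermediateField
      with hEdef
    have hEmem : ∀ x : L, x ∈ Agrp₁ → x ∈ E := fun x hx => hx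
    have hEmem' : ∀ x : ↥E, (↑x : L) ∈ Agrp₁ := fun x => x.2
    -- the algebra homomorphism θ : E →ₐ[K] L, θ(a) = u⁻¹ * Ψ a
    obtain ⟨Θ, hΘ⟩ : ∃ Θ : L →ₐ[FixedPoints.subfield ↥G L] L,
        ∀ x : L, x ∈ Agrp₁ → Θ x = u⁻¹ * Ψ x := by
      let θ : ↥E →ₐ[FixedPoints.subfield ↥G L] L :=
        { toFun := fun a => u⁻¹ * Ψ ↑a
          map_one' := by
            show u⁻¹ * Ψ ((1 : ↥E) : L) = 1
            rw [show ((1 : ↥E) : L) = 1 from rfl, ← hudef]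
            exact inv_mul_cancel₀ hu
          map_mul' := fun a b => by
            show u⁻¹ * Ψ ((a * b : ↥E) : L) = (u⁻¹ * Ψ ↑a) * (u⁻¹ * Ψ ↑b)
            rw [show ((a * b : ↥E) : L) = ↑a * ↑b from rfl]
            have h2 := hΨmul ↑a (hEmem' a) ↑b (hEmem' b)
            have h3 : Ψ ((a : L) * ↑b) = u⁻¹ * (Ψ ↑a * Ψ ↑b) := by
              rw [← h2, ← mul_assoc, inv_mul_cancel₀ hu, one_mul]
            rw [h3]; ring
          map_zero' := by
            show u⁻¹ * Ψ ((0 : ↥E) : L) = 0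
            rw [show ((0 : ↥E) : L) = 0 from rfl, hΨzero, mul_zero]
          map_add' := fun a b => by
            show u⁻¹ * Ψ ((a + b : ↥E) : L) = u⁻¹ * Ψ ↑a + u⁻¹ * Ψ ↑b
            rw [show ((a + b : ↥E) : L) = ↑a + ↑b from rfl,
              hΨadd ↑a (hEmem' a) ↑b (hEmem' b), mul_add]
          commutes' := fun k => by
            have hk : (↑k : L) ∈ Kset := (hKsub ↑k).mp k.2
            show u⁻¹ * Ψ ((algebraMap (FixedPoints.subfield ↥G L) ↥E k : ↥E) : L)
                = algebraMap (FixedPoints.subfield ↥G L) L k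
            rw [show ((algebraMap (FixedPoints.subfield ↥G L) ↥E k : ↥E) : L) = ↑k from rfl,
              show (algebraMap (FixedPoints.subfield ↥G L) L) k = ↑k from rfl]
            have h2 : (↑k : L) = ↑k * 1 := (mul_one _).symm
            rw [h2, hΨl ↑k hk 1 hone, ← hudef]
            field_simp }
      refine ⟨θ.liftNormal L, fun x hx => ?_⟩
      have h1 := θ.liftNormal_commutes L ⟨x, hEmem x hx⟩
      have h2 : (algebraMap ↥E L) (⟨x, hEmem x hx⟩ : ↥E) = x := rfl
      rw [h2] at h1
      exact h1
    obtain ⟨g, hg⟩ := (FixedPoints.toAlgHom_bijective ↥G L).surjective Θ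
    have hgx : ∀ x, (↑g : RingAut L) x = Θ x := fun x => by rw [← hg]; rfl
    have hgμ : ∀ k ∈ Kset, (↑g : RingAut L) (μ₁ k) = μ₂ k := by
      intro k hk
      rw [hgx, hΘ _ (hμ₁K k hk)]
      have h1 : μ₁ k = 1 * μ₁ k := (one_mul _).symm
      rw [h1, hΨr k hk 1 hone, ← hudef]
      field_simp
    -- conclude via the separation hypothesis
    set ν : RingAut L := ↑g * μ₁ * (↑g)⁻¹ with hνdef
    have hν : ν ∈ M := hinv ↑g g.2 μ₁ hμ₁
    set ρ : RingAut L := ν⁻¹ * μ₂ with hρdef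
    have hρfix : ∀ k ∈ Kset, ρ k = k := by
      intro k hk
      have h1 : ν k = μ₂ k := by
        show (↑g : RingAut L) (μ₁ ((↑g : RingAut L)⁻¹ k)) = μ₂ k
        rw [show ((↑g : RingAut L)⁻¹ k) = k from hk _ (inv_mem g.2)]
        exact hgμ k hk
      show ν⁻¹ (μ₂ k) = k
      rw [← h1]
      exact ν.symm_apply_apply k
    have hρG : ρ ∈ G := hArtin ρ hρfix
    have hμ₂eq : μ₂ = ν * ρ := by rw [hρdef]; group
    refine ⟨ρ⁻¹ * ↑g, mul_mem (inv_mem hρG) g.2, ?_⟩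
    have hν'' : ρ⁻¹ * ν * ρ ∈ M := by
      have h1 := hinv ρ⁻¹ (inv_mem hρG) ν hν
      rwa [inv_inv] at h1
    have hG' : μ₂ * (ρ⁻¹ * ν * ρ)⁻¹ ∈ G := by
      have h1 : μ₂ * (ρ⁻¹ * ν * ρ)⁻¹ = ρ := by rw [hμ₂eq]; group
      rw [h1]; exact hρG
    have hfin := hsep μ₂ hμ₂ _ hν'' hG'
    rw [hfin, hνdef]; group
  · -- the easy direction: conjugates give equal generators
    rintro ⟨g, hgG, hgeq⟩
    have himg : T₁.image (fun t => t * μ₁ * t⁻¹) = T₂.image (fun t => t * μ₂ * t⁻¹) := by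
      ext ν
      simp only [Finset.mem_image]
      constructor
      · rintro ⟨t, ht, rfl⟩
        obtain ⟨t', ht', h, hh, hfix, heq⟩ := hT₂b (t * g⁻¹) (mul_mem (hT₁a ht) (inv_mem hgG))
        refine ⟨t', ht', ?_⟩
        calc t' * μ₂ * t'⁻¹
            = t' * (h * μ₂ * h⁻¹) * t'⁻¹ := by rw [hfix]
          _ = (t' * h) * μ₂ * (t' * h)⁻¹ := by group
          _ = (t * g⁻¹) * μ₂ * (t * g⁻¹)⁻¹ := by rw [← heq]
          _ = t * μ₁ * t⁻¹ := by rw [hgeq]; group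
      · rintro ⟨t, ht, rfl⟩
        obtain ⟨t', ht', h, hh, hfix, heq⟩ := hT₁b (t * g) (mul_mem (hT₂a ht) hgG)
        refine ⟨t', ht', ?_⟩
        calc t' * μ₁ * t'⁻¹
            = t' * (h * μ₁ * h⁻¹) * t'⁻¹ := by rw [hfix]
          _ = (t' * h) * μ₁ * (t' * h)⁻¹ := by group
          _ = (t * g) * μ₁ * (t * g)⁻¹ := by rw [← heq]
          _ = t * μ₂ * t⁻¹ := by rw [hgeq]; group
    have hB : bk T₁ μ₁ 1 = bk T₂ μ₂ 1 := by
      have h1 : bk T₁ μ₁ 1 = ∑ ν ∈ T₁.image (fun t => t * μ₁ * t⁻¹), Finsupp.single ν 1 := by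
        rw [Finset.sum_image (fun x hx y hy h => hinj₁ x hx y hy h)]
        exact Finset.sum_congr rfl fun t _ => by rw [map_one]
      have h2 : bk T₂ μ₂ 1 = ∑ ν ∈ T₂.image (fun t => t * μ₂ * t⁻¹), Finsupp.single ν 1 := by
        rw [Finset.sum_image (fun x hx y hy h => hinj₂ x hx y hy h)]
        exact Finset.sum_congr rfl fun t _ => by rw [map_one]
      rw [h1, h2, himg]
    have hKK : KbimK G (bk T₁ μ₁ 1) = KbimK G (bk T₂ μ₂ 1) := by rw [hB]
    refine ⟨fun x => ⟨↑x, hKK ▸ x.2⟩, ⟨fun x y h => by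
      have h' := congrArg Subtype.val h
      exact Subtype.ext h',
      fun y => ⟨⟨↑y, hKK.symm ▸ y.2⟩, Subtype.ext rfl⟩⟩,
      fun x y => Subtype.ext rfl, fun k _ x y h => h, fun k _ x y h => h⟩
end

section
/- In the setup above, 𝒦 = ℒ^G decomposes as a K-bimodule as the direct sum over G-orbits of ℳ: 𝒦 = ⊕_{μ ∈ ℳ/G} K[μ]K. -/
/-!
A `G`-invariant `X` satisfies `g (X (g⁻¹ ν g)) = X ν` for all `g ∈ G`. Taking `g` in the
stabiliser of `ν` gives the invariance of the coefficients; since the condition "`ν` lies in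
the `G`-orbit of `μ`" is itself invariant under `ν ↦ g⁻¹ ν g`, the same identity passes to the
restriction of `X` to an orbit. Distinct orbits are disjoint, so `X` is the sum of its
restrictions to the orbits meeting its support.
-/

/-- The action of an automorphism `g` on `ℒ = L ∗ ℳ` (inside `RingAut L →₀ L`) by
`g(aν) = g(a)(gνg⁻¹)`. -/
noncomputable def gactR {L : Type*} [Field L] (g : RingAut L) (X : RingAut L →₀ L) :
    RingAut L →₀ L :=
  X.sum fun ν c => Finsupp.single (g * ν * g⁻¹) (g c)

theorem Finsupp.eq_sum_filter_of_cover {α ι M : Type*} [AddCommMonoid M] (X : α →₀ M)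
    (s : Finset ι) (p : ι → α → Prop) [∀ i, DecidablePred (p i)]
    (hdisj : ∀ i ∈ s, ∀ j ∈ s, ∀ a, p i a → p j a → i = j)
    (hcover : ∀ a, X a ≠ 0 → ∃ i ∈ s, p i a) :
    X = ∑ i ∈ s, X.filter (p i) := by
  ext a
  rw [Finset.sum_apply']
  by_cases ha : X a = 0
  · simp [Finsupp.filter_apply, ha]
  obtain ⟨i, his, hi⟩ := hcover a ha
  rw [Finset.sum_eq_single_of_mem i his, Finsupp.filter_apply_pos _ _ hi]
  intro j hjs hji
  exact Finsupp.filter_apply_neg _ _ fun hj => hji (hdisj j hjs i his a hj hi)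

section Conj

variable {α : Type*} [Group α] {G : Subgroup α}

theorem exists_conj_eq_inv_conj_iff {g : α} (hg : g ∈ G) (μ ν : α) :
    (∃ h ∈ G, h * μ * h⁻¹ = g⁻¹ * ν * g) ↔ ∃ h ∈ G, h * μ * h⁻¹ = ν := by
  constructor
  · rintro ⟨h, hh, he⟩
    refine ⟨g * h, G.mul_mem hg hh, ?_⟩
    rw [show g * h * μ * (g * h)⁻¹ = g * (h * μ * h⁻¹) * g⁻¹ by group, he]
    group
  · rintro ⟨h, hh, rfl⟩
    exact ⟨g⁻¹ * h, G.mul_mem (G.inv_mem hg) hh, by group⟩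

theorem eq_of_exists_conj_eq_of_exists_conj_eq {μ μ' ν : α}
    (hdisj : ¬∃ g ∈ G, g * μ * g⁻¹ = μ')
    (hμ : ∃ h ∈ G, h * μ * h⁻¹ = ν) (hμ' : ∃ h ∈ G, h * μ' * h⁻¹ = ν) : μ = μ' := by
  obtain ⟨h, hh, rfl⟩ := hμ
  obtain ⟨h', hh', he⟩ := hμ'
  refine absurd ⟨h'⁻¹ * h, G.mul_mem (G.inv_mem hh') hh, ?_⟩ hdisj
  rw [show h'⁻¹ * h * μ * (h'⁻¹ * h)⁻¹ = h'⁻¹ * (h * μ * h⁻¹) * h' by group, ← he]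
  group

end Conj

section GAct

variable {L : Type*} [Field L]

theorem gactR_apply (g : RingAut L) (X : RingAut L →₀ L) (ν : RingAut L) :
    gactR g X ν = g (X (g⁻¹ * ν * g)) := by
  classical
  rw [gactR, Finsupp.sum_apply, Finsupp.sum, Finset.sum_eq_single (g⁻¹ * ν * g)]
  · simp [show g * (g⁻¹ * ν * g) * g⁻¹ = ν by group]
  · intro b _ hb
    rw [Finsupp.single_apply, if_neg]
    rintro rfl
    exact hb (by group)
  · intro h
    simp [Finsupp.notMem_support_iff.mp h]

theorem gactR_filter (g : RingAut L) (X : RingAut L →₀ L) (p : RingAut L → Prop)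
    [DecidablePred p] (hp : ∀ ν, p (g⁻¹ * ν * g) ↔ p ν) :
    gactR g (X.filter p) = (gactR g X).filter p := by
  ext ν
  by_cases hν : p ν
  · rw [gactR_apply, Finsupp.filter_apply_pos _ _ hν, Finsupp.filter_apply_pos _ _ ((hp ν).2 hν),
      gactR_apply]
  · rw [gactR_apply, Finsupp.filter_apply_neg _ _ hν,
      Finsupp.filter_apply_neg _ _ (mt (hp ν).1 hν), map_zero]

theorem apply_eq_of_gactR_eq {g : RingAut L} {X : RingAut L →₀ L} (hX : gactR g X = X)
    {ν : RingAut L} (hν : g * ν * g⁻¹ = ν) : g (X ν) = X ν := by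
  have hν' : g⁻¹ * ν * g = ν := by
    conv_lhs => rw [← hν]
    group
  conv_rhs => rw [← hX, gactR_apply, hν']

end GAct

open scoped Classical in
theorem stmt13_general (L : Type*) [Field L] (G : Subgroup (RingAut L))
    (M : Submonoid (RingAut L))
    (X : RingAut L →₀ L)
    (hfix : ∀ g ∈ G, gactR g X = X) :
    (∀ ν : RingAut L, ∀ g ∈ G, g * ν * g⁻¹ = ν → g (X ν) = X ν)
    ∧ (∀ μ : RingAut L, ∀ g ∈ G,
        gactR g (X.filter fun ν => ∃ h ∈ G, h * μ * h⁻¹ = ν)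
          = X.filter fun ν => ∃ h ∈ G, h * μ * h⁻¹ = ν)
    ∧ (∀ s : Finset (RingAut L), (↑s : Set (RingAut L)) ⊆ (M : Set (RingAut L)) →
        (∀ μ ∈ s, ∀ μ' ∈ s, μ ≠ μ' → ¬∃ g ∈ G, g * μ * g⁻¹ = μ') →
        (∀ ν, X ν ≠ 0 → ∃ μ ∈ s, ∃ g ∈ G, g * μ * g⁻¹ = ν) →
        X = ∑ μ ∈ s, X.filter fun ν => ∃ h ∈ G, h * μ * h⁻¹ = ν) := by
  refine ⟨fun ν g hg hν => apply_eq_of_gactR_eq (hfix g hg) hν, fun μ g hg => ?_,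
    fun s _ hpair hcover => X.eq_sum_filter_of_cover s _ ?_ hcover⟩
  · rw [gactR_filter g X _ (exists_conj_eq_inv_conj_iff hg μ), hfix g hg]
  · intro μ hμ μ' hμ' ν h h'
    by_contra hne
    exact hne (eq_of_exists_conj_eq_of_exists_conj_eq (hpair μ hμ μ' hμ' hne) h h')

open scoped Classical in
/-- `𝒦 = ℒ^G` decomposes as a direct sum over `G`-orbits in `ℳ`: every `G`-invariant
`X ∈ L ∗ ℳ` has `G_ν`-invariant coefficients, its orbit components are again `G`-invariant
(and of the form `[aμ]`, i.e. lie in `K[μ]K`), and `X` is the (direct) sum of its orbit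
components over any set of representatives of the orbits meeting its support. -/
theorem stmt13 (L : Type*) [Field L] (G : Subgroup (RingAut L))
    (hGfin : (G : Set (RingAut L)).Finite)
    (M : Submonoid (RingAut L))
    (hsep : ∀ ν₁ ∈ M, ∀ ν₂ ∈ M, ν₁ * ν₂⁻¹ ∈ G → ν₁ = ν₂)
    (hinv : ∀ g ∈ G, ∀ ν ∈ M, g * ν * g⁻¹ ∈ M)
    (X : RingAut L →₀ L)
    (hsupp : ∀ ν, X ν ≠ 0 → ν ∈ M)
    (hfix : ∀ g ∈ G, gactR g X = X) :
    (∀ ν : RingAut L, ∀ g ∈ G, g * ν * g⁻¹ = ν → g (X ν) = X ν)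
    ∧ (∀ μ : RingAut L, ∀ g ∈ G,
        gactR g (X.filter fun ν => ∃ h ∈ G, h * μ * h⁻¹ = ν)
          = X.filter fun ν => ∃ h ∈ G, h * μ * h⁻¹ = ν)
    ∧ (∀ s : Finset (RingAut L), (↑s : Set (RingAut L)) ⊆ (M : Set (RingAut L)) →
        (∀ μ ∈ s, ∀ μ' ∈ s, μ ≠ μ' → ¬∃ g ∈ G, g * μ * g⁻¹ = μ') →
        (∀ ν, X ν ≠ 0 → ∃ μ ∈ s, ∃ g ∈ G, g * μ * g⁻¹ = ν) →
        X = ∑ μ ∈ s, X.filter fun ν => ∃ h ∈ G, h * μ * h⁻¹ = ν) :=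
  stmt13_general L G M X hfix
end

section
/- Let Λ = k[x₁^{±1},…,xₙ^{±1}] be the Laurent polynomial ring, and let G = G(2,2,n) = Sₙ ⋉ A(2,2,n) act by g(xᵢ) = αᵢ x_{σ(i)} where α ∈ {±1}ⁿ with ∏αᵢ = 1. Let sgn : G → {±1} be given by sgn(σα) = sgn(σ). Then Λ^G_{sgn} = Λ^G · 𝒱_q where 𝒱_q = ∏_{i<j} ((xᵢ/xⱼ) − (xᵢ/xⱼ)⁻¹)/(q − q⁻¹), for q ∈ k nonzero and not a root of unity. -/
section QOGZ

variable {k : Type*} [Field k] (n : ℕ)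

/-- The action of `g = σα ∈ G(2,2,n) = Sₙ ⋉ A(2,2,n)` on the Laurent polynomial ring
`k[x₁^{±1},…,xₙ^{±1}]` (realized as `AddMonoidAlgebra k (Fin n → ℤ)`), determined by
`g(xᵢ) = αᵢ x_{σ(i)}`; on a monomial `x^m` it gives `(∏ᵢ αᵢ^{mᵢ}) x^{m∘σ⁻¹}`. -/
noncomputable def lact (σ : Equiv.Perm (Fin n)) (α : Fin n → ℤˣ)
    (f : AddMonoidAlgebra k (Fin n → ℤ)) : AddMonoidAlgebra k (Fin n → ℤ) :=
  Finsupp.sum f.coeff fun m c =>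
    AddMonoidAlgebra.single (m ∘ ⇑σ.symm) (c * ∏ i, ((α i : ℤ) : k) ^ (m i))

/-- The `q`-Vandermonde `𝒱_q = ∏_{i<j} ((xᵢ/xⱼ) − (xᵢ/xⱼ)⁻¹)/(q − q⁻¹)`. -/
noncomputable def qVandermonde (q : k) : AddMonoidAlgebra k (Fin n → ℤ) :=
  ∏ i : Fin n, ∏ j ∈ Finset.Ioi i,
    (AddMonoidAlgebra.single (Pi.single i (1 : ℤ) - Pi.single j (1 : ℤ)) ((q - q⁻¹)⁻¹)
      - AddMonoidAlgebra.single (Pi.single j (1 : ℤ) - Pi.single i (1 : ℤ)) ((q - q⁻¹)⁻¹))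

end QOGZ

/-!
Up to the unit monomial `(x₁⋯xₙ)^(1-n)` and a nonzero constant, `𝒱_q` is the Vandermonde product
`V = ∏_{i<j} (xⱼ² - xᵢ²)` in the squares of the variables. `G` permutes the `xᵢ²`, so `V` is
`sgn`-relative invariant, and the monomial is invariant because `∏ αᵢ = 1`. As `Λ` is a domain,
everything reduces to `V ∣ f` for a relative invariant `f`.

Write `V = ∏ (xⱼ - ε xᵢ)` over `i < j` and `ε = ±1`. The substitution `Φ : xⱼ ↦ ε xᵢ` satisfies
`xⱼ - ε xᵢ ∣ h - Φ h`, and it absorbs the transposition `(i j)` with signs `αᵢ = αⱼ = ε`, which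
negates `f`; hence `Φ f = -Φ f = 0` and `xⱼ - ε xᵢ ∣ f`. Since `Φ` kills none of the other linear
factors, they can be split off `f` one at a time.
-/

open Finset AddMonoidAlgebra

theorem Finset.prod_dvd_of_map_eq_zero {ι R S F : Type*} [CommMonoid R] [MulZeroClass S]
    [NoZeroDivisors S] [FunLike F R S] [MulHomClass F R S] (d : ι → R) (Φ : ι → F)
    (hd : ∀ i h, Φ i h = 0 → d i ∣ h) {s : Finset ι}
    (hs : ∀ i ∈ s, ∀ j ∈ s, i ≠ j → Φ i (d j) ≠ 0) {f : R} (hf : ∀ i ∈ s, Φ i f = 0) :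
    ∏ i ∈ s, d i ∣ f := by
  classical
  induction s using Finset.induction_on generalizing f with
  | empty => simp
  | insert a s ha ih =>
    obtain ⟨g, rfl⟩ := hd a f (hf a (mem_insert_self a s))
    rw [prod_insert ha]
    refine mul_dvd_mul_left _ (ih (fun i hi j hj => hs i (mem_insert_of_mem hi) j
      (mem_insert_of_mem hj)) fun i hi => ?_)
    have hfi := hf i (mem_insert_of_mem hi)
    rw [map_mul] at hfi
    exact (mul_eq_zero.mp hfi).resolve_left
      (hs i (mem_insert_of_mem hi) a (mem_insert_self a s) (ne_of_mem_of_not_mem hi ha))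

theorem Fin.sum_sum_Ioi_add {M : Type*} [AddCommMonoid M] {n : ℕ} (f : Fin n → M) :
    ∑ i, ∑ j ∈ Ioi i, (f i + f j) = (n - 1) • ∑ i, f i := by
  have hswap : ∑ i, ∑ j ∈ Ioi i, f j = ∑ j, ∑ _i ∈ Iio j, f j :=
    sum_comm' fun i j => by simp [and_comm]
  simp only [sum_add_distrib]
  rw [hswap, smul_sum, ← sum_add_distrib]
  refine sum_congr rfl fun i _ => ?_
  rw [Finset.sum_const, Finset.sum_const, ← add_smul, Fin.card_Ioi, Fin.card_Iio]
  congr 1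
  omega

theorem Fin.prod_prod_Ioi_sub_comp_perm {R : Type*} [CommRing R] {n : ℕ} (v : Fin n → R)
    (σ : Equiv.Perm (Fin n)) :
    ∏ i, ∏ j ∈ Ioi i, (v (σ j) - v (σ i))
      = (Equiv.Perm.sign σ : ℤ) • ∏ i, ∏ j ∈ Ioi i, (v j - v i) := by
  rw [zsmul_eq_mul, ← Matrix.det_vandermonde, ← Matrix.det_vandermonde, ← Matrix.det_permute]
  rfl

theorem Int.cast_units_ne_zero {R : Type*} [Ring R] [Nontrivial R] (u : ℤˣ) :
    ((u : ℤ) : R) ≠ 0 := by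
  rcases Int.units_eq_one_or u with rfl | rfl <;> simp

theorem AddMonoidAlgebra.single_sub_single_ne_zero {R M : Type*} [Ring R] {a b : M} (hab : a ≠ b)
    {c : R} (hc : c ≠ 0) (c' : R) : single a c - single b c' ≠ 0 := by
  rw [sub_ne_zero]
  intro h
  exact hc (by simpa [coeff_single, hab.symm] using congr_arg (fun f => f.coeff a) h)

theorem AddMonoidAlgebra.isUnit_single {R M : Type*} [Semifield R] [AddCommGroup M] (m : M) {c : R}
    (hc : c ≠ 0) : IsUnit (single m c) :=
  IsUnit.of_mul_eq_one (single (-m) c⁻¹) (by rw [single_mul_single, add_neg_cancel,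
    mul_inv_cancel₀ hc, one_def])

namespace AddMonoidAlgebra

variable {k M N : Type*} [CommSemiring k] [AddMonoid M] [AddMonoid N]

noncomputable def twistMapDomain (A : M →+ N) (χ : Multiplicative M →* k) : k[M] →ₐ[k] k[N] :=
  lift k k[N] M
    { toFun m := single (A m.toAdd) (χ m)
      map_one' := by simp [one_def]
      map_mul' a b := by simp [single_mul_single] }

@[simp]
theorem twistMapDomain_single (A : M →+ N) (χ : Multiplicative M →* k) (m : M) (c : k) :
    twistMapDomain A χ (single m c) = single (A m) (c * χ (.ofAdd m)) := by
  simp [twistMapDomain]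

theorem twistMapDomain_apply (A : M →+ N) (χ : Multiplicative M →* k) (f : k[M]) :
    twistMapDomain A χ f = f.coeff.sum fun m c => single (A m) (c * χ (.ofAdd m)) := by
  simp [twistMapDomain, lift_apply]

end AddMonoidAlgebra

section Laurent

variable {k ι : Type*} [Field k]

def permAddHom (σ : Equiv.Perm ι) : (ι → ℤ) →+ (ι → ℤ) :=
  (LinearMap.funLeft ℤ ℤ σ.symm).toAddMonoidHom

section DecidableEq

variable [DecidableEq ι]

variable (k) in
noncomputable def laurentVar (i : ι) : k[ι → ℤ] :=
  single (Pi.single i 1) 1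

theorem smul_laurentVar_sub_ne_zero {a b : ι} (hab : a ≠ b) {c : k} (hc : c ≠ 0) (c' : k) :
    c • laurentVar k a - c' • laurentVar k b ≠ 0 := by
  simp only [laurentVar, smul_single', mul_one]
  exact single_sub_single_ne_zero (fun h => by simpa [hab] using congr_fun h a) hc c'

def substAddHom (j i : ι) : (ι → ℤ) →+ (ι → ℤ) where
  toFun m := m + m j • (Pi.single i 1 - Pi.single j 1)
  map_zero' := by simp
  map_add' a b := by simp only [Pi.add_apply, add_smul]; abel

end DecidableEq

section Fintype

variable [Fintype ι]

noncomputable def signChar (u : ι → ℤˣ) : Multiplicative (ι → ℤ) →* k where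
  toFun m := ∏ i, ((u i : ℤ) : k) ^ m.toAdd i
  map_one' := by simp
  map_mul' a b := by
    simp only [toAdd_mul, Pi.add_apply, ← prod_mul_distrib]
    exact prod_congr rfl fun i _ => zpow_add₀ (Int.cast_units_ne_zero _) _ _

noncomputable def signedPermAct (σ : Equiv.Perm ι) (α : ι → ℤˣ) : k[ι → ℤ] →ₐ[k] k[ι → ℤ] :=
  twistMapDomain (permAddHom σ) (signChar α)

theorem signedPermAct_single_const (σ : Equiv.Perm ι) {α : ι → ℤˣ} (hα : ∏ i, α i = 1) (z : ℤ)
    (c : k) : signedPermAct σ α (single (fun _ => z) c) = single (fun _ => z) c := by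
  have hχ : signChar (k := k) α (.ofAdd fun _ => z) = 1 := by
    simp only [signChar, MonoidHom.coe_mk, OneHom.coe_mk, toAdd_ofAdd, prod_zpow]
    rw [← Int.cast_prod, ← Units.coe_prod, hα]
    simp
  rw [signedPermAct, twistMapDomain_single, hχ, mul_one]
  rfl

end Fintype

variable [Fintype ι] [DecidableEq ι]

theorem AddMonoidAlgebra.algHom_ext_laurentVar {A : Type*} [CommSemiring A] [Algebra k A]
    ⦃φ ψ : k[ι → ℤ] →ₐ[k] A⦄ (h : ∀ i, φ (laurentVar k i) = ψ (laurentVar k i)) : φ = ψ := by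
  refine algHom_ext (fun m => ?_) (Subsingleton.elim _ _)
  rw [← univ_sum_single m, ← prod_const_one, ← prod_single, map_prod, map_prod]
  refine prod_congr rfl fun i _ => ?_
  have hi : (φ : k[ι → ℤ] →* A).comp
        ((of k _).comp (AddMonoidHom.toMultiplicative (AddMonoidHom.single _ i)))
      = (ψ : k[ι → ℤ] →* A).comp
        ((of k _).comp (AddMonoidHom.toMultiplicative (AddMonoidHom.single _ i))) :=
    MonoidHom.ext_mint (h i)
  exact DFunLike.congr_fun hi (.ofAdd (m i))

theorem signChar_single (u : ι → ℤˣ) (i : ι) (z : ℤ) :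
    signChar (k := k) u (.ofAdd (Pi.single i z)) = ((u i : ℤ) : k) ^ z := by
  rw [signChar, MonoidHom.coe_mk, OneHom.coe_mk, prod_eq_single i (fun t _ ht => by simp [ht])
    (by simp)]
  simp

theorem signedPermAct_laurentVar (σ : Equiv.Perm ι) (α : ι → ℤˣ) (i : ι) :
    signedPermAct σ α (laurentVar k i) = ((α i : ℤ) : k) • laurentVar k (σ i) := by
  rw [signedPermAct, laurentVar, twistMapDomain_single, signChar_single, laurentVar, smul_single',
    zpow_one, one_mul, mul_one]
  congr 1
  exact Pi.single_comp_equiv σ.symm i 1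

noncomputable def substVar (j i : ι) (ε : ℤˣ) : k[ι → ℤ] →ₐ[k] k[ι → ℤ] :=
  twistMapDomain (substAddHom j i) (signChar (Pi.mulSingle j ε))

theorem substVar_laurentVar (j i : ι) (ε : ℤˣ) (t : ι) :
    substVar j i ε (laurentVar k t)
      = if t = j then ((ε : ℤ) : k) • laurentVar k i else laurentVar k t := by
  rw [substVar, laurentVar, twistMapDomain_single, signChar_single, substAddHom,
    AddMonoidHom.coe_mk, ZeroHom.coe_mk, zpow_one, one_mul]
  split_ifs with ht
  · subst ht
    simp [laurentVar]
  · simp [Ne.symm ht, ht]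

theorem sub_dvd_sub_substVar (j i : ι) (ε : ℤˣ) (h : k[ι → ℤ]) :
    laurentVar k j - ((ε : ℤ) : k) • laurentVar k i ∣ h - substVar j i ε h := by
  set π := Ideal.Quotient.mkₐ k (Ideal.span {laurentVar k j - ((ε : ℤ) : k) • laurentVar k i})
  -- modulo `xⱼ - ε xᵢ`, the substitution is the identity on every variable
  have hπ : π.comp (substVar j i ε) = π := by
    refine algHom_ext_laurentVar fun t => ?_
    rw [AlgHom.comp_apply, substVar_laurentVar]
    split_ifs with ht
    · subst ht
      rw [Ideal.Quotient.mkₐ_eq_mk, Ideal.Quotient.eq, Ideal.mem_span_singleton']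
      exact ⟨-1, by ring⟩
    · rfl
  rw [← Ideal.mem_span_singleton, ← Ideal.Quotient.eq, ← Ideal.Quotient.mkₐ_eq_mk k]
  exact (DFunLike.congr_fun hπ h).symm

theorem substVar_comp_signedPermAct {i j : ι} (hij : i ≠ j) (ε : ℤˣ) :
    (substVar j i ε).comp (signedPermAct (Equiv.swap i j) (Pi.mulSingle i ε * Pi.mulSingle j ε))
      = substVar (k := k) j i ε := by
  refine algHom_ext_laurentVar fun t => ?_
  rw [AlgHom.comp_apply, signedPermAct_laurentVar, map_smul, substVar_laurentVar,
    substVar_laurentVar]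
  rcases eq_or_ne t i with rfl | hti
  · simp [hij, smul_smul, ← Int.cast_mul]
  · rcases eq_or_ne t j with rfl | htj
    · simp [hij, hti]
    · simp [Equiv.swap_apply_of_ne_of_ne hti htj, hti, htj]

theorem substVar_eq_zero_of_signedPermAct_eq_neg [CharZero k] {i j : ι} (hij : i ≠ j) (ε : ℤˣ)
    {f : k[ι → ℤ]}
    (hf : signedPermAct (Equiv.swap i j) (Pi.mulSingle i ε * Pi.mulSingle j ε) f = -f) :
    substVar j i ε f = 0 := by
  have h : substVar j i ε f = -substVar j i ε f := by
    conv_lhs => rw [← substVar_comp_signedPermAct hij ε, AlgHom.comp_apply, hf, map_neg]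
  have h2 : (2 : k) • substVar j i ε f = 0 := by rw [two_smul]; nth_rw 1 [h]; exact neg_add_cancel _
  exact (smul_eq_zero.mp h2).resolve_left two_ne_zero

end Laurent

section Vandermonde

variable {k : Type*} [Field k] {n : ℕ}

theorem lact_eq_signedPermAct (σ : Equiv.Perm (Fin n)) (α : Fin n → ℤˣ) :
    lact (k := k) n σ α = signedPermAct σ α := by
  ext f
  rw [lact, signedPermAct, twistMapDomain_apply]
  rfl

theorem substVar_linearFactor_ne_zero [CharZero k] {i j i' j' : Fin n} (hij : i < j)
    (hij' : i' < j') {ε ε' : ℤˣ} (hne : (i', j', ε') ≠ (i, j, ε)) :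
    substVar j i ε (laurentVar k j' - ((ε' : ℤ) : k) • laurentVar k i') ≠ 0 := by
  rw [map_sub, map_smul, substVar_laurentVar, substVar_laurentVar]
  by_cases hj : j' = j
  · subst hj
    rw [if_pos rfl, if_neg hij'.ne]
    by_cases hi : i' = i
    · subst hi
      have hε : ε ≠ ε' := fun h => hne (by rw [h])
      rw [← sub_smul]
      refine smul_ne_zero (sub_ne_zero.2 fun h => hε ?_) (by simp [laurentVar])
      exact Units.val_injective (Int.cast_injective h)
    · exact smul_laurentVar_sub_ne_zero (Ne.symm hi) (Int.cast_units_ne_zero ε) _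
  · rw [if_neg hj, ← one_smul k (laurentVar k j')]
    split_ifs with hi
    · subst hi
      rw [smul_smul]
      exact smul_laurentVar_sub_ne_zero (hij.trans hij').ne' one_ne_zero _
    · exact smul_laurentVar_sub_ne_zero hij'.ne' one_ne_zero _

variable (k n) in
noncomputable def vandermondeSq : k[Fin n → ℤ] :=
  ∏ i, ∏ j ∈ Ioi i, (laurentVar k j ^ 2 - laurentVar k i ^ 2)

theorem vandermondeSq_eq_prod_linearFactor :
    vandermondeSq k n = ∏ p ∈ (univ.sigma fun i : Fin n => Ioi i) ×ˢ (univ : Finset ℤˣ),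
      (laurentVar k p.1.2 - ((p.2 : ℤ) : k) • laurentVar k p.1.1) := by
  rw [prod_product, prod_sigma, vandermondeSq]
  refine prod_congr rfl fun i _ => prod_congr rfl fun j _ => ?_
  rw [show (univ : Finset ℤˣ) = {1, -1} from rfl, prod_pair (by decide)]
  simp only [Units.val_one, Int.cast_one, one_smul, Units.val_neg, Int.cast_neg, neg_smul,
    sub_neg_eq_add]
  ring

theorem vandermondeSq_ne_zero : vandermondeSq k n ≠ 0 := by
  rw [vandermondeSq_eq_prod_linearFactor, prod_ne_zero_iff]
  rintro ⟨⟨i, j⟩, ε⟩ hp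
  simp only [mem_product, mem_sigma, mem_univ, mem_Ioi, true_and, and_true] at hp
  rw [← one_smul k (laurentVar k j)]
  exact smul_laurentVar_sub_ne_zero hp.ne' one_ne_zero _

theorem signedPermAct_vandermondeSq (σ : Equiv.Perm (Fin n)) (α : Fin n → ℤˣ) :
    signedPermAct σ α (vandermondeSq k n) = (Equiv.Perm.sign σ : ℤ) • vandermondeSq k n := by
  have hsq : ∀ i, signedPermAct σ α (laurentVar k i ^ 2) = laurentVar k (σ i) ^ 2 := fun i => by
    rw [map_pow, signedPermAct_laurentVar, smul_pow, ← Int.cast_pow, ← Units.val_pow_eq_pow_val,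
      Int.units_sq, Units.val_one, Int.cast_one, one_smul]
  simp only [vandermondeSq, map_prod, map_sub, hsq]
  exact Fin.prod_prod_Ioi_sub_comp_perm (fun i => laurentVar k i ^ 2) σ

theorem vandermondeSq_dvd [CharZero k] {f : k[Fin n → ℤ]}
    (hf : ∀ (σ : Equiv.Perm (Fin n)) (α : Fin n → ℤˣ), ∏ i, α i = 1 →
      signedPermAct σ α f = (Equiv.Perm.sign σ : ℤ) • f) :
    vandermondeSq k n ∣ f := by
  rw [vandermondeSq_eq_prod_linearFactor]
  refine prod_dvd_of_map_eq_zero _ (fun p => substVar p.1.2 p.1.1 p.2)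
    (fun p h hp => by simpa [hp] using sub_dvd_sub_substVar p.1.2 p.1.1 p.2 h) ?_ ?_
  · rintro ⟨⟨i, j⟩, ε⟩ hp ⟨⟨i', j'⟩, ε'⟩ hp' hne
    simp only [mem_product, mem_sigma, mem_univ, mem_Ioi, true_and, and_true] at hp hp'
    exact substVar_linearFactor_ne_zero hp hp' (by aesop)
  · rintro ⟨⟨i, j⟩, ε⟩ hp
    simp only [mem_product, mem_sigma, mem_univ, mem_Ioi, true_and, and_true] at hp
    refine substVar_eq_zero_of_signedPermAct_eq_neg hp.ne ε ?_
    rw [hf _ _ (by simp [prod_mul_distrib]), Equiv.Perm.sign_swap hp.ne]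
    simp

theorem qVandermonde_eq_single_mul (q : k) :
    qVandermonde n q
      = single (fun _ => -((n - 1 : ℕ) : ℤ)) (∏ i : Fin n, ∏ _j ∈ Ioi i, -(q - q⁻¹)⁻¹)
        * vandermondeSq k n := by
  have hfac : ∀ i j : Fin n,
      single (Pi.single i 1 - Pi.single j 1) (q - q⁻¹)⁻¹
        - single (Pi.single j 1 - Pi.single i 1) (q - q⁻¹)⁻¹
      = single (-(Pi.single i 1 + Pi.single j 1)) (-(q - q⁻¹)⁻¹)
        * (laurentVar k j ^ 2 - laurentVar k i ^ 2) := fun i j => by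
    rw [laurentVar, laurentVar, single_pow, single_pow, mul_sub, single_mul_single,
      single_mul_single, one_pow, mul_one, single_neg, single_neg]
    rw [show -(Pi.single i 1 + Pi.single j 1) + 2 • Pi.single j 1
        = (Pi.single j 1 - Pi.single i 1 : Fin n → ℤ) by abel,
      show -(Pi.single i 1 + Pi.single j 1) + 2 • Pi.single i 1
        = (Pi.single i 1 - Pi.single j 1 : Fin n → ℤ) by abel]
    abel
  have hexp : ∑ i : Fin n, ∑ j ∈ Ioi i, -(Pi.single i 1 + Pi.single j 1)
      = fun _ : Fin n => -((n - 1 : ℕ) : ℤ) := by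
    simp only [sum_neg_distrib, Fin.sum_sum_Ioi_add, univ_sum_single (fun _ : Fin n => (1 : ℤ))]
    ext
    simp
  simp only [qVandermonde, vandermondeSq, hfac, prod_mul_distrib, prod_single, hexp]

theorem signedPermAct_qVandermonde (q : k) (σ : Equiv.Perm (Fin n)) {α : Fin n → ℤˣ}
    (hα : ∏ i, α i = 1) :
    signedPermAct σ α (qVandermonde n q) = (Equiv.Perm.sign σ : ℤ) • qVandermonde n q := by
  rw [qVandermonde_eq_single_mul, map_mul, signedPermAct_single_const σ hα,
    signedPermAct_vandermondeSq, mul_smul_comm]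

theorem associated_vandermondeSq_qVandermonde {q : k} (hq : q - q⁻¹ ≠ 0) :
    Associated (vandermondeSq k n) (qVandermonde n q) := by
  rw [qVandermonde_eq_single_mul]
  refine (associated_unit_mul_left _ _ (isUnit_single _ ?_)).symm
  exact prod_ne_zero_iff.2 fun _ _ => prod_ne_zero_iff.2 fun _ _ => neg_ne_zero.2 (inv_ne_zero hq)

end Vandermonde

theorem stmt17_general (k : Type*) [Field k] [CharZero k] (n : ℕ)
    (q : k) (hq : q ≠ 0) (hroot : ∀ m : ℕ, 0 < m → q ^ m ≠ 1)
    (f : AddMonoidAlgebra k (Fin n → ℤ)) :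
    (∀ (σ : Equiv.Perm (Fin n)) (α : Fin n → ℤˣ), (∏ i, α i) = 1 →
        lact n σ α f = (Equiv.Perm.sign σ : ℤ) • f)
      ↔ ∃ g : AddMonoidAlgebra k (Fin n → ℤ),
          (∀ (σ : Equiv.Perm (Fin n)) (α : Fin n → ℤˣ), (∏ i, α i) = 1 →
            lact n σ α g = g) ∧
          f = g * qVandermonde n q := by
  have hq' : q - q⁻¹ ≠ 0 := fun h => hroot 2 two_pos <| by
    rw [sq, ← mul_inv_cancel₀ hq, ← sub_eq_zero.mp h]
  have hV := associated_vandermondeSq_qVandermonde (n := n) hq'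
  simp only [lact_eq_signedPermAct]
  constructor
  · intro hf
    obtain ⟨g, rfl⟩ := hV.dvd_iff_dvd_left.mp (vandermondeSq_dvd hf)
    refine ⟨g, fun σ α hα => mul_left_cancel₀ (hV.ne_zero_iff.mp vandermondeSq_ne_zero) ?_,
      mul_comm _ _⟩
    have hfσ := hf σ α hα
    rw [map_mul, signedPermAct_qVandermonde q σ hα, smul_mul_assoc, ← Units.smul_def,
      ← Units.smul_def] at hfσ
    exact (smul_left_cancel_iff _).mp hfσ
  · rintro ⟨g, hg, rfl⟩ σ α hα
    rw [map_mul, hg σ α hα, signedPermAct_qVandermonde q σ hα, mul_smul_comm]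

/-- Let `Λ = k[x₁^{±1},…,xₙ^{±1}]` with `G = G(2,2,n)` acting by `g(xᵢ) = αᵢ x_{σ(i)}`
(`∏αᵢ = 1`), over an algebraically closed field `k` of characteristic zero, and `q ∈ k`
nonzero and not a root of unity.  Then a Laurent polynomial `f` is `sgn`-relative invariant
iff `f = g·𝒱_q` with `g` a `G`-invariant; i.e. `Λ^G_{sgn} = Λ^G·𝒱_q`. -/
theorem stmt17 (k : Type*) [Field k] [CharZero k] [IsAlgClosed k] (n : ℕ)
    (q : k) (hq : q ≠ 0) (hroot : ∀ m : ℕ, 0 < m → q ^ m ≠ 1)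
    (f : AddMonoidAlgebra k (Fin n → ℤ)) :
    (∀ (σ : Equiv.Perm (Fin n)) (α : Fin n → ℤˣ), (∏ i, α i) = 1 →
        lact n σ α f = (Equiv.Perm.sign σ : ℤ) • f)
      ↔ ∃ g : AddMonoidAlgebra k (Fin n → ℤ),
          (∀ (σ : Equiv.Perm (Fin n)) (α : Fin n → ℤˣ), (∏ i, α i) = 1 →
            lact n σ α g = g) ∧
          f = g * qVandermonde n q :=
  stmt17_general k n q hq hroot f
end
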